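/- arXiv:1811.12842 — 4 statements merged into one kernel-verified Lean document; each statement's English description precedes it below -/
import Mathlib

section
/- Let Q be a simple Artinian ring with a separated filtration v (v(x)=∞ implies x=0). Then for x ∈ Q, the growth rate ρ(x) = lim_n v(x^n)/n is infinite if and only if x is nilpotent. -/
open Filter

/-- A filtration on a ring `Q`: a map `v : Q → ℤ ∪ {∞}` with
`v(x+y) ≥ min(v x, v y)`, `v(xy) ≥ v x + v y`, `v 1 = 0` and `v 0 = ∞`. -/
structure RingFiltration (Q : Type*) [Ring Q] where
  v : Q → WithTop ℤ
  min_le_add : ∀ x y : Q, min (v x) (v y) ≤ v (x + y)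
  add_le_mul : ∀ x y : Q, v x + v y ≤ v (x * y)
  map_one : v 1 = 0
  map_zero : v 0 = ⊤

/-- Interpret an element of `ℤ ∪ {∞}` as an extended real number. -/
noncomputable def toE (a : WithTop ℤ) : EReal :=
  WithTop.recTopCoe ⊤ (fun n => ((n : ℝ) : EReal)) a

/-- The growth rate function `ρ(x) = lim_n v(x^n)/n` of a filtration
(defined as a `limsup`, which coincides with the limit whenever it exists). -/
noncomputable def growthRate {Q : Type*} [Ring Q] (F : RingFiltration Q) (x : Q) : EReal :=
  Filter.limsup (fun n : ℕ => toE (F.v (x ^ n)) * (((n : ℝ)⁻¹ : ℝ) : EReal)) Filter.atTop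

lemma toE_coe (a : ℤ) : toE (a : WithTop ℤ) = ((a : ℝ) : EReal) := rfl

lemma toE_top : toE (⊤ : WithTop ℤ) = ⊤ := rfl

lemma coe_nsmul_withTop (j : ℕ) (m : ℤ) :
    j • ((m : WithTop ℤ)) = (((j • m : ℤ)) : WithTop ℤ) := by
  induction j with
  | zero => simp
  | succ j ih => rw [succ_nsmul, ih, succ_nsmul, WithTop.coe_add]

lemma RingFiltration.nsmul_v_le {Q : Type*} [Ring Q] (F : RingFiltration Q) (b : Q) :
    ∀ j : ℕ, j • F.v b ≤ F.v (b ^ j)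
  | 0 => by simp [F.map_one]
  | (j + 1) => by
      rw [succ_nsmul, pow_succ]
      exact le_trans (add_le_add_left (F.nsmul_v_le b j) _) (F.add_le_mul _ _)

/-- In a simple Artinian ring with a separated filtration, the growth rate of `x` is
infinite if and only if `x` is nilpotent. -/
theorem growthRate_eq_top_iff_isNilpotent {Q : Type*} [Ring Q]
    [IsSimpleRing Q] [IsArtinianRing Q] (F : RingFiltration Q)
    (hsep : ∀ x : Q, F.v x = ⊤ → x = 0) (x : Q) :
    growthRate F x = ⊤ ↔ IsNilpotent x := by
  constructor
  · intro h
    by_contra hnil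
    have hxn : ∀ n : ℕ, x ^ n ≠ 0 := fun n hn => hnil ⟨n, hn⟩
    -- descending chain of left ideals `Q x^n` stabilizes
    have hmono : Monotone (fun n : ℕ => OrderDual.toDual (Submodule.span Q {x ^ n})) := by
      intro n m hnm
      simp only [OrderDual.toDual_le_toDual]
      rw [Submodule.span_le]
      intro y hy
      rcases Set.mem_singleton_iff.mp hy with rfl
      rw [SetLike.mem_coe, Submodule.mem_span_singleton]
      exact ⟨x ^ (m - n), by rw [smul_eq_mul, ← pow_add, Nat.sub_add_cancel hnm]⟩
    obtain ⟨k, hk⟩ := IsArtinian.monotone_stabilizes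
      (⟨fun n : ℕ => OrderDual.toDual (Submodule.span Q {x ^ n}), hmono⟩ : ℕ →o (Submodule Q Q)ᵒᵈ)
    have hspan : Submodule.span Q {x ^ k} = Submodule.span Q {x ^ (k + 1)} := by
      have := hk (k + 1) (Nat.le_succ k)
      simpa using this
    have hxk : x ^ k ∈ Submodule.span Q {x ^ (k + 1)} := by
      rw [← hspan]; exact Submodule.mem_span_singleton_self _
    obtain ⟨b, hb⟩ := Submodule.mem_span_singleton.mp hxk
    rw [smul_eq_mul] at hb
    -- x^k = b^j * x^(k+j)
    have key : ∀ j : ℕ, x ^ k = b ^ j * x ^ (k + j) := by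
      intro j
      induction j with
      | zero => simp
      | succ j ih =>
        have : x ^ (k + j) = b * x ^ (k + j + 1) := by
          calc x ^ (k + j) = x ^ k * x ^ j := by rw [← pow_add]
            _ = (b * x ^ (k + 1)) * x ^ j := by rw [hb]
            _ = b * x ^ (k + j + 1) := by rw [mul_assoc, ← pow_add]; ring_nf
        rw [ih, this, ← mul_assoc, ← pow_succ]
        rfl
    have hb0 : b ≠ 0 := by
      intro h0
      exact hxn k (by rw [← hb, h0, zero_mul])
    -- v b and v (x^k) are finite
    obtain ⟨m, hm⟩ := WithTop.ne_top_iff_exists.mp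
      (fun ht => hb0 (hsep b ht))
    obtain ⟨C, hC⟩ := WithTop.ne_top_iff_exists.mp
      (fun ht => hxn k (hsep _ ht))
    -- main estimate
    have hest : ∀ j : ℕ, ∀ a : ℤ, F.v (x ^ (k + j)) = (a : WithTop ℤ) →
        (j : ℤ) * m + a ≤ C := by
      intro j a ha
      have h1 : F.v (b ^ j) + F.v (x ^ (k + j)) ≤ F.v (x ^ k) := by
        rw [key j]; exact F.add_le_mul _ _
      have h2 : (j • F.v b) + F.v (x ^ (k + j)) ≤ F.v (x ^ k) :=
        le_trans (add_le_add_left (F.nsmul_v_le b j) _) h1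
      rw [← hm, ← hC, ha] at h2
      rw [coe_nsmul_withTop, ← WithTop.coe_add] at h2
      have h4 : (j • m : ℤ) + a ≤ C := by exact_mod_cast h2
      simpa [nsmul_eq_mul] using h4
    -- eventual bound on the sequence
    set R : ℝ := |(C : ℝ)| + |(m : ℝ)| with hR
    have hev : ∀ᶠ n : ℕ in atTop,
        toE (F.v (x ^ n)) * (((n : ℝ)⁻¹ : ℝ) : EReal) ≤ ((R : ℝ) : EReal) := by
      rw [eventually_atTop]
      refine ⟨max k 1, fun n hn => ?_⟩
      have hk' : k ≤ n := le_trans (le_max_left _ _) hn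
      have h1' : 1 ≤ n := le_trans (le_max_right _ _) hn
      obtain ⟨a, ha⟩ := WithTop.ne_top_iff_exists.mp
        (fun ht => hxn n (hsep _ ht))
      have hja : ((n - k : ℕ) : ℤ) * m + a ≤ C := by
        apply hest (n - k)
        rw [Nat.add_sub_cancel' hk', ha]
      rw [← ha, toE_coe]
      rw [← EReal.coe_mul, EReal.coe_le_coe_iff]
      -- real arithmetic
      have hnR : (1 : ℝ) ≤ (n : ℝ) := by exact_mod_cast h1'
      have hnpos : (0 : ℝ) < (n : ℝ) := lt_of_lt_of_le one_pos hnR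
      have hinv : (0 : ℝ) < ((n : ℝ))⁻¹ := inv_pos.mpr hnpos
      have hinv1 : ((n : ℝ))⁻¹ ≤ 1 := inv_le_one_of_one_le₀ hnR
      have hmul : (n : ℝ) * (n : ℝ)⁻¹ = 1 := mul_inv_cancel₀ (ne_of_gt hnpos)
      have haR : (a : ℝ) ≤ (C : ℝ) - ((n : ℝ) - (k : ℝ)) * (m : ℝ) := by
        have : ((n - k : ℕ) : ℝ) = (n : ℝ) - (k : ℝ) := by
          push_cast [Nat.cast_sub hk']; ring
        have h' : ((n - k : ℕ) : ℝ) * (m : ℝ) + (a : ℝ) ≤ (C : ℝ) := by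
          exact_mod_cast hja
        rw [this] at h'; linarith
      have hkn : (k : ℝ) ≤ (n : ℝ) := by exact_mod_cast hk'
      have habs : (a : ℝ) ≤ |(C : ℝ)| + (n : ℝ) * |(m : ℝ)| := by
        have h1 : -(((n : ℝ) - (k : ℝ)) * (m : ℝ)) ≤ ((n : ℝ) - (k : ℝ)) * |(m : ℝ)| := by
          rw [← mul_neg]
          exact mul_le_mul_of_nonneg_left (neg_le_abs _) (by linarith)
        have h2 : ((n : ℝ) - (k : ℝ)) * |(m : ℝ)| ≤ (n : ℝ) * |(m : ℝ)| :=
          mul_le_mul_of_nonneg_right (by linarith) (abs_nonneg _)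
        have h3 : (C : ℝ) ≤ |(C : ℝ)| := le_abs_self _
        linarith
      calc (a : ℝ) * (n : ℝ)⁻¹ ≤ (|(C : ℝ)| + (n : ℝ) * |(m : ℝ)|) * (n : ℝ)⁻¹ :=
            mul_le_mul_of_nonneg_right habs (le_of_lt hinv)
        _ = |(C : ℝ)| * (n : ℝ)⁻¹ + |(m : ℝ)| := by
            rw [add_mul, mul_assoc, mul_left_comm, hmul, mul_one]
        _ ≤ R := by
            have : |(C : ℝ)| * (n : ℝ)⁻¹ ≤ |(C : ℝ)| := by
              nlinarith [abs_nonneg ((C : ℝ))]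
            rw [hR]; linarith
    have hle : growthRate F x ≤ ((R : ℝ) : EReal) :=
      Filter.limsup_le_of_le (by isBoundedDefault) hev
    rw [h] at hle
    exact absurd hle (not_le.mpr (EReal.coe_lt_top R))
  · rintro ⟨m, hm⟩
    have hev : ∀ᶠ n : ℕ in atTop,
        toE (F.v (x ^ n)) * (((n : ℝ)⁻¹ : ℝ) : EReal) = (⊤ : EReal) := by
      rw [eventually_atTop]
      refine ⟨max m 1, fun n hn => ?_⟩
      have hm' : m ≤ n := le_trans (le_max_left _ _) hn
      have h1' : 1 ≤ n := le_trans (le_max_right _ _) hn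
      have hx0 : x ^ n = 0 := by
        rw [← Nat.add_sub_cancel' hm', pow_add, hm, zero_mul]
      rw [hx0, F.map_zero, toE_top]
      apply EReal.top_mul_of_pos
      have : (0 : ℝ) < ((n : ℝ))⁻¹ := by
        apply inv_pos.mpr
        exact_mod_cast lt_of_lt_of_le zero_lt_one h1'
      exact_mod_cast this
    calc growthRate F x
        = Filter.limsup (fun _ : ℕ => (⊤ : EReal)) atTop := Filter.limsup_congr hev
      _ = ⊤ := limsup_const _
end

section
/- Let Q be a simple Artinian F_p-algebra and c_1, …, c_t nonzero commuting elements of Q with c_i^p = c_i for all i. If c_1, …, c_t are linearly dependent over the centre Z(Q), and no proper subset of {c_1,…,c_t} is Z(Q)-linearly dependent, then c_1, …, c_t are linearly dependent over F_p. -/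
/-- A sum of pairwise commuting elements raised to the `p`-th power in characteristic `p`. -/
lemma aux_sum_pow_char_of_commute {R : Type*} [Ring R] (p : ℕ) [Fact p.Prime] [CharP R p]
    {ι : Type*} (s : Finset ι) (f : ι → R)
    (h : ∀ i ∈ s, ∀ j ∈ s, Commute (f i) (f j)) :
    (∑ i ∈ s, f i) ^ p = ∑ i ∈ s, f i ^ p := by
  induction s using Finset.cons_induction with
  | empty => simp [zero_pow (Fact.out : p.Prime).ne_zero]
  | cons a s ha ih =>
    rw [Finset.sum_cons, Finset.sum_cons,
      add_pow_char_of_commute _ (Commute.sum_right _ _ _ fun j hj =>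
        h a (Finset.mem_cons_self a s) j (Finset.mem_cons_of_mem hj)),
      ih fun i hi j hj => h i (Finset.mem_cons_of_mem hi) j (Finset.mem_cons_of_mem hj)]

/-- In a field of characteristic `p`, a solution of `z ^ p = z` lies in the prime field. -/
lemma aux_mem_prime_field {p : ℕ} [Fact p.Prime] {K : Type*} [Field K] [CharP K p]
    {z : K} (hz : z ^ p = z) : ∃ β : ZMod p, (ZMod.castHom dvd_rfl K) β = z := by
  by_contra h
  push_neg at h
  set φ : ZMod p →+* K := ZMod.castHom dvd_rfl K
  have hp : p.Prime := Fact.out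
  set f : Polynomial K := Polynomial.X ^ p - Polynomial.X with hf
  have hdX : (Polynomial.X : Polynomial K).natDegree < (Polynomial.X ^ p : Polynomial K).natDegree := by
    simpa using hp.one_lt
  have hfd : f.natDegree = p := by
    rw [hf, Polynomial.natDegree_sub_eq_left_of_natDegree_lt hdX]
    simp
  have hf0 : f ≠ 0 := by
    intro h0
    rw [h0, Polynomial.natDegree_zero] at hfd
    exact hp.ne_zero hfd.symm
  have hroot : ∀ x : K, x ^ p = x → x ∈ f.roots := by
    intro x hx
    rw [Polynomial.mem_roots hf0]
    simp [hf, Polynomial.IsRoot, hx]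
  classical
  set Z : Finset K := insert z (Finset.image φ Finset.univ) with hZ
  have hsub : Z.val ⊆ f.roots := by
    intro x hx
    rw [hZ] at hx
    simp only [Finset.insert_val, Finset.image_val, Multiset.mem_dedup, Multiset.mem_ndinsert,
      Multiset.mem_map] at hx
    rcases hx with rfl | ⟨b, _, rfl⟩
    · exact hroot _ hz
    · exact hroot _ (by rw [← map_pow, ZMod.pow_card])
  have hcard : Z.card = p + 1 := by
    rw [hZ, Finset.card_insert_of_notMem (by
      simp only [Finset.mem_image]
      rintro ⟨b, _, hb⟩
      exact h b hb),
      Finset.card_image_of_injective _ φ.injective]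
    simp [ZMod.card]
  have := Polynomial.card_le_degree_of_subset_roots hsub
  omega

/-- Let `Q` be a simple Artinian `F_p`-algebra and `c_1, …, c_t` nonzero commuting elements
with `c_i^p = c_i`.  If the `c_i` are linearly dependent over the centre `Z(Q)` but no proper
subset of them is `Z(Q)`-linearly dependent, then they are linearly dependent over `F_p`. -/
theorem fp_linear_dependence_of_minimal_central_dependence
    (p : ℕ) [Fact p.Prime]
    (Q : Type*) [Ring Q] [Algebra (ZMod p) Q] [IsSimpleRing Q] [IsArtinianRing Q]
    (t : ℕ) (c : Fin t → Q)
    (hc0 : ∀ i, c i ≠ 0)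
    (hcomm : ∀ i j, Commute (c i) (c j))
    (hidem : ∀ i, c i ^ p = c i)
    (hdep : ∃ α : Fin t → Q, (∀ i, α i ∈ Subring.center Q) ∧ (∃ i, α i ≠ 0) ∧
      ∑ i, α i * c i = 0)
    (hmin : ∀ s : Finset (Fin t), s ≠ Finset.univ →
      ∀ α : Fin t → Q, (∀ i, α i ∈ Subring.center Q) → (∑ i ∈ s, α i * c i = 0) →
        ∀ i ∈ s, α i = 0) :
    ∃ β : Fin t → ZMod p, β ≠ 0 ∧ ∑ i, β i • c i = 0 := by
  obtain ⟨α, hαc, ⟨i₀, hi₀⟩, hsum⟩ := hdep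
  have hchar : CharP Q p := charP_of_injective_algebraMap' (ZMod p) p
  -- the center as a field
  set K := Subring.center Q with hK
  letI : Field K := (IsSimpleRing.isField_center Q).toField
  have hcharK : CharP K p := CharP.subring Q p K
  -- every coefficient in a minimal dependence is nonzero
  have hall : ∀ j, α j ≠ 0 := by
    intro j hj
    have hne : (Finset.univ.erase j : Finset (Fin t)) ≠ Finset.univ := by
      intro h
      have := Finset.mem_univ j
      rw [← h] at this
      exact Finset.notMem_erase j _ this
    have hs : ∑ i ∈ Finset.univ.erase j, α i * c i = 0 := by
      rw [Finset.sum_erase _ (by rw [hj, zero_mul])]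
      exact hsum
    have hzero := hmin _ hne α hαc hs
    rcases eq_or_ne i₀ j with rfl | hij
    · exact hi₀ hj
    · exact hi₀ (hzero i₀ (Finset.mem_erase.mpr ⟨hij, Finset.mem_univ _⟩))
  -- commutation facts
  have hcent : ∀ (z : K) (q : Q), Commute (z : Q) q := fun z q =>
    ((Subring.mem_center_iff.mp z.2) q).symm
  -- normalize the dependence
  set a : K := ⟨α i₀, hαc i₀⟩ with ha
  have ha0 : a ≠ 0 := fun h => hi₀ (by simpa [ha, Subtype.ext_iff] using h)
  set γ : Fin t → K := fun i => a⁻¹ * ⟨α i, hαc i⟩ with hγ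
  have hγi₀ : γ i₀ = 1 := by rw [hγ]; exact inv_mul_cancel₀ ha0
  have hγsum : ∑ i, (γ i : Q) * c i = 0 := by
    have : ∀ i, ((γ i : Q) * c i) = ((a⁻¹ : K) : Q) * (α i * c i) := by
      intro i
      push_cast [hγ]
      rw [mul_assoc]
    rw [Finset.sum_congr rfl fun i _ => this i, ← Finset.mul_sum, hsum, mul_zero]
  -- raise to the p-th power
  have hγpsum : ∑ i, ((γ i ^ p : K) : Q) * c i = 0 := by
    have hcom : ∀ i ∈ (Finset.univ : Finset (Fin t)), ∀ j ∈ (Finset.univ : Finset (Fin t)),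
        Commute ((γ i : Q) * c i) ((γ j : Q) * c j) := by
      intro i _ j _
      exact Commute.mul_left (hcent (γ i) _) ((hcent (γ j) (c i)).symm.mul_right (hcomm i j))
    have := aux_sum_pow_char_of_commute p Finset.univ (fun i => (γ i : Q) * c i) hcom
    rw [hγsum, zero_pow (Fact.out : p.Prime).ne_zero] at this
    have heq : ∀ i : Fin t, ((γ i : Q) * c i) ^ p = ((γ i ^ p : K) : Q) * c i := by
      intro i
      rw [(hcent (γ i) (c i)).mul_pow, hidem i]
      norm_cast
    rw [Finset.sum_congr rfl fun i _ => heq i] at this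
    exact this.symm
  -- the difference dependence has zero coefficient at i₀
  set δ : Fin t → K := fun i => γ i ^ p - γ i with hδ
  have hδi₀ : δ i₀ = 0 := by rw [hδ]; simp [hγi₀]
  have hδsum : ∑ i, (δ i : Q) * c i = 0 := by
    have : ∀ i : Fin t, (δ i : Q) * c i = ((γ i ^ p : K) : Q) * c i - (γ i : Q) * c i := by
      intro i
      simp only [hδ]
      push_cast
      rw [sub_mul]
    rw [Finset.sum_congr rfl fun i _ => this i, Finset.sum_sub_distrib, hγsum, hγpsum, sub_zero]
  -- minimality forces all differences to vanish
  have hδall : ∀ i, δ i = 0 := by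
    have hne : (Finset.univ.erase i₀ : Finset (Fin t)) ≠ Finset.univ := by
      intro h
      have := Finset.mem_univ i₀
      rw [← h] at this
      exact Finset.notMem_erase i₀ _ this
    have hs : ∑ i ∈ Finset.univ.erase i₀, (δ i : Q) * c i = 0 := by
      rw [Finset.sum_erase _ (by rw [hδi₀]; simp)]
      exact hδsum
    have hzero := hmin _ hne (fun i => (δ i : Q)) (fun i => (δ i).2) hs
    intro i
    rcases eq_or_ne i i₀ with rfl | hii
    · exact hδi₀
    · have := hzero i (Finset.mem_erase.mpr ⟨hii, Finset.mem_univ _⟩)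
      exact Subtype.ext this
  have hγp : ∀ i, γ i ^ p = γ i := by
    intro i
    have := hδall i
    rw [hδ] at this
    simpa [sub_eq_zero] using this
  -- each γ i lies in the prime field
  choose β hβ using fun i => aux_mem_prime_field (hγp i)
  refine ⟨β, ?_, ?_⟩
  · intro h
    have hβi₀ : (ZMod.castHom dvd_rfl K) (β i₀) = 1 := by rw [hβ i₀, hγi₀]
    rw [h] at hβi₀
    simp only [Pi.zero_apply, map_zero] at hβi₀
    exact zero_ne_one hβi₀
  · have halg : ∀ i : Fin t, (β i) • c i = (γ i : Q) * c i := by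
      intro i
      rw [Algebra.smul_def]
      congr 1
      have : algebraMap (ZMod p) Q = K.subtype.comp (ZMod.castHom dvd_rfl K) :=
        RingHom.ext_zmod _ _
      rw [this, RingHom.comp_apply, hβ i]
      rfl
    rw [Finset.sum_congr rfl fun i _ => halg i]
    exact hγsum
end

section
/- Let D be a complete noncommutative discrete valuation ring whose quotient division ring Q(D) is finite-dimensional over its centre F, and let R = F ∩ D (a complete commutative DVR). Then there exists an F-basis x_1, …, x_s of Q(D) contained in D such that D = R x_1 ⊕ ⋯ ⊕ R x_s; i.e. D is a free R-lattice in Q(D). -/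
namespace dvrlat
variable {Q : Type*} [DivisionRing Q] (v : Q → WithTop ℤ)

theorem v_zero (hv0 : ∀ a : Q, v a = ⊤ ↔ a = 0) : v 0 = ⊤ := (hv0 0).mpr rfl

theorem v_ne_top (hv0 : ∀ a : Q, v a = ⊤ ↔ a = 0) {a : Q} (ha : a ≠ 0) : v a ≠ ⊤ :=
  fun h => ha ((hv0 a).mp h)

theorem exists_int (hv0 : ∀ a : Q, v a = ⊤ ↔ a = 0) {a : Q} (ha : a ≠ 0) :
    ∃ n : ℤ, v a = (n : WithTop ℤ) := by
  rcases WithTop.ne_top_iff_exists.mp (v_ne_top v hv0 ha) with ⟨n, hn⟩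
  exact ⟨n, hn.symm⟩

theorem v_neg_one (hv0 : ∀ a : Q, v a = ⊤ ↔ a = 0) (hv1 : v 1 = 0)
    (hvmul : ∀ a b : Q, v (a * b) = v a + v b) : v (-1 : Q) = 0 := by
  obtain ⟨n, hn⟩ := exists_int v hv0 (neg_ne_zero.mpr (one_ne_zero (α := Q)))
  have h : v ((-1 : Q) * (-1)) = 0 := by rw [neg_one_mul, neg_neg, hv1]
  rw [hvmul, hn, ← WithTop.coe_add] at h
  have : n + n = 0 := by exact_mod_cast h
  have : n = 0 := by omega
  rw [hn, this]; rfl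

theorem v_neg (hv0 : ∀ a : Q, v a = ⊤ ↔ a = 0) (hv1 : v 1 = 0)
    (hvmul : ∀ a b : Q, v (a * b) = v a + v b) (a : Q) : v (-a) = v a := by
  have := hvmul (-1) a
  rw [neg_one_mul, v_neg_one v hv0 hv1 hvmul, zero_add] at this
  exact this

theorem v_inv (hv0 : ∀ a : Q, v a = ⊤ ↔ a = 0) (hv1 : v 1 = 0)
    (hvmul : ∀ a b : Q, v (a * b) = v a + v b) {a : Q} (ha : a ≠ 0) {n : ℤ}
    (hn : v a = (n : WithTop ℤ)) : v a⁻¹ = ((-n : ℤ) : WithTop ℤ) := by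
  obtain ⟨m, hm⟩ := exists_int v hv0 (inv_ne_zero ha)
  have h : v (a⁻¹ * a) = 0 := by rw [inv_mul_cancel₀ ha, hv1]
  rw [hvmul, hm, hn, ← WithTop.coe_add] at h
  have : m + n = 0 := by exact_mod_cast h
  have : m = -n := by omega
  rw [hm, this]

theorem v_sum (hv0 : ∀ a : Q, v a = ⊤ ↔ a = 0)
    (hvadd : ∀ a b : Q, min (v a) (v b) ≤ v (a + b))
    {ι : Type*} (s : Finset ι) (f : ι → Q) (N : WithTop ℤ)
    (h : ∀ i ∈ s, N ≤ v (f i)) : N ≤ v (∑ i ∈ s, f i) := by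
  classical
  induction s using Finset.cons_induction with
  | empty => simp [v_zero v hv0]
  | cons a s ha ih =>
    rw [Finset.sum_cons]
    refine le_trans (le_min (h a (Finset.mem_cons_self a s)) ?_) (hvadd _ _)
    exact ih fun i hi => h i (Finset.mem_cons_of_mem hi)

theorem v_pow (hv0 : ∀ a : Q, v a = ⊤ ↔ a = 0) (hv1 : v 1 = 0)
    (hvmul : ∀ a b : Q, v (a * b) = v a + v b) (a : Q) {n : ℤ}
    (hn : v a = (n : WithTop ℤ)) (t : ℕ) : v (a ^ t) = ((t * n : ℤ) : WithTop ℤ) := by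
  induction t with
  | zero => simpa using hv1
  | succ t ih =>
    rw [pow_succ, hvmul, ih, hn, ← WithTop.coe_add]
    congr 1
    push_cast; ring


open scoped Classical in
noncomputable def qnorm (x : Q) : ℝ :=
  if x = 0 then 0 else (2 : ℝ) ^ (-(WithTop.untopD 0 (v x)))

theorem qnorm_zero : qnorm v (0 : Q) = 0 := by rw [qnorm]; simp

theorem qnorm_eq {x : Q} (hx : x ≠ 0) {n : ℤ} (hn : v x = (n : WithTop ℤ)) :
    qnorm v x = (2 : ℝ) ^ (-n) := by
  rw [qnorm, if_neg hx, hn]; rfl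

theorem qnorm_nonneg (x : Q) : 0 ≤ qnorm v x := by
  rw [qnorm]; split
  · exact le_refl 0
  · positivity

theorem qnorm_pos {x : Q} (hx : x ≠ 0) : 0 < qnorm v x := by
  rw [qnorm, if_neg hx]; positivity

theorem qnorm_eq_zero {x : Q} (h : qnorm v x = 0) : x = 0 := by
  by_contra hx
  exact (qnorm_pos v hx).ne' h

theorem qnorm_mul (hv0 : ∀ a : Q, v a = ⊤ ↔ a = 0)
    (hvmul : ∀ a b : Q, v (a * b) = v a + v b) (x y : Q) :
    qnorm v (x * y) = qnorm v x * qnorm v y := by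
  by_cases hx : x = 0
  · rw [hx, zero_mul, qnorm_zero, zero_mul]
  by_cases hy : y = 0
  · rw [hy, mul_zero, qnorm_zero, mul_zero]
  obtain ⟨n, hn⟩ := exists_int v hv0 hx
  obtain ⟨m, hm⟩ := exists_int v hv0 hy
  have hxy : v (x * y) = ((n + m : ℤ) : WithTop ℤ) := by
    rw [hvmul, hn, hm, WithTop.coe_add]
  rw [qnorm_eq v (mul_ne_zero hx hy) hxy, qnorm_eq v hx hn, qnorm_eq v hy hm,
    neg_add, zpow_add₀ (by norm_num : (2:ℝ) ≠ 0)]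

theorem qnorm_mono (hv0 : ∀ a : Q, v a = ⊤ ↔ a = 0) {a b : Q} (h : v a ≤ v b) :
    qnorm v b ≤ qnorm v a := by
  by_cases hb : b = 0
  · rw [hb, qnorm_zero]; exact qnorm_nonneg v a
  have ha : a ≠ 0 := by
    intro h0
    rw [h0, v_zero v hv0, top_le_iff] at h
    exact hb ((hv0 b).mp h)
  obtain ⟨n, hn⟩ := exists_int v hv0 ha
  obtain ⟨m, hm⟩ := exists_int v hv0 hb
  rw [hn, hm, WithTop.coe_le_coe] at h
  rw [qnorm_eq v ha hn, qnorm_eq v hb hm]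
  exact zpow_le_zpow_right₀ (by norm_num) (by omega)

theorem qnorm_add (hv0 : ∀ a : Q, v a = ⊤ ↔ a = 0)
    (hvadd : ∀ a b : Q, min (v a) (v b) ≤ v (a + b)) (x y : Q) :
    qnorm v (x + y) ≤ max (qnorm v x) (qnorm v y) := by
  rcases le_total (v x) (v y) with h | h
  · exact le_max_of_le_left (qnorm_mono v hv0 ((min_eq_left h) ▸ hvadd x y))
  · exact le_max_of_le_right (qnorm_mono v hv0 ((min_eq_right h) ▸ hvadd x y))

theorem qnorm_le_iff (hv0 : ∀ a : Q, v a = ⊤ ↔ a = 0) (x : Q) (N : ℤ) :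
    qnorm v x ≤ (2 : ℝ) ^ (-N) ↔ (N : WithTop ℤ) ≤ v x := by
  by_cases hx : x = 0
  · simp only [hx, qnorm_zero, v_zero v hv0, le_top, iff_true]
    positivity
  obtain ⟨n, hn⟩ := exists_int v hv0 hx
  rw [qnorm_eq v hx hn, hn, WithTop.coe_le_coe,
    zpow_le_zpow_iff_right₀ (by norm_num : (1:ℝ) < 2)]
  omega


theorem qnorm_neg (hv0 : ∀ a : Q, v a = ⊤ ↔ a = 0) (hv1 : v 1 = 0)
    (hvmul : ∀ a b : Q, v (a * b) = v a + v b) (x : Q) : qnorm v (-x) = qnorm v x := by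
  by_cases hx : x = 0
  · rw [hx, neg_zero]
  obtain ⟨n, hn⟩ := exists_int v hv0 hx
  rw [qnorm_eq v hx hn, qnorm_eq v (neg_ne_zero.mpr hx) (by rw [v_neg v hv0 hv1 hvmul, hn])]

noncomputable def qAGN (hv0 : ∀ a : Q, v a = ⊤ ↔ a = 0) (hv1 : v 1 = 0)
    (hvmul : ∀ a b : Q, v (a * b) = v a + v b)
    (hvadd : ∀ a b : Q, min (v a) (v b) ≤ v (a + b)) : AddGroupNorm Q where
  toFun := qnorm v
  map_zero' := qnorm_zero v
  add_le' := fun x y => (qnorm_add v hv0 hvadd x y).trans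
    (max_le (le_add_of_nonneg_right (qnorm_nonneg v y)) (le_add_of_nonneg_left (qnorm_nonneg v x)))
  neg' := qnorm_neg v hv0 hv1 hvmul
  eq_zero_of_map_eq_zero' := fun _ h => qnorm_eq_zero v h

@[reducible] noncomputable def qNDR (hv0 : ∀ a : Q, v a = ⊤ ↔ a = 0) (hv1 : v 1 = 0)
    (hvmul : ∀ a b : Q, v (a * b) = v a + v b)
    (hvadd : ∀ a b : Q, min (v a) (v b) ≤ v (a + b)) : NormedDivisionRing Q :=
  { AddGroupNorm.toNormedAddCommGroup (qAGN v hv0 hv1 hvmul hvadd),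
    (inferInstance : DivisionRing Q) with
    norm_mul := qnorm_mul v hv0 hvmul }

theorem exists_zpow_lt {ε : ℝ} (hε : 0 < ε) : ∃ N : ℤ, (2:ℝ) ^ (-(N:ℤ)) < ε := by
  obtain ⟨n, hn⟩ := exists_pow_lt_of_lt_one hε (by norm_num : (1:ℝ)/2 < 1)
  refine ⟨n, lt_of_le_of_lt (le_of_eq ?_) hn⟩
  rw [← zpow_natCast ((1:ℝ)/2) n, one_div, inv_zpow, ← zpow_neg]

def Rring (hv0 : ∀ a : Q, v a = ⊤ ↔ a = 0) (hv1 : v 1 = 0)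
    (hvmul : ∀ a b : Q, v (a * b) = v a + v b)
    (hvadd : ∀ a b : Q, min (v a) (v b) ≤ v (a + b)) : Subring (Subring.center Q) where
  carrier := {c : Subring.center Q | 0 ≤ v (c : Q)}
  mul_mem' {a b} ha hb := by
    simp only [Set.mem_setOf_eq] at ha hb ⊢
    have hab : ((a * b : Subring.center Q) : Q) = (a : Q) * (b : Q) := rfl
    rw [hab, hvmul]
    exact add_nonneg ha hb
  one_mem' := by
    simp only [Set.mem_setOf_eq]
    have h1 : ((1 : Subring.center Q) : Q) = 1 := rfl
    rw [h1, hv1]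
  add_mem' {a b} ha hb := by
    simp only [Set.mem_setOf_eq] at ha hb ⊢
    have hab : ((a + b : Subring.center Q) : Q) = (a : Q) + (b : Q) := rfl
    rw [hab]
    exact le_trans (le_min ha hb) (hvadd _ _)
  zero_mem' := by
    simp only [Set.mem_setOf_eq]
    have h0 : ((0 : Subring.center Q) : Q) = 0 := rfl
    rw [h0, v_zero v hv0]
    exact le_top
  neg_mem' {a} ha := by
    simp only [Set.mem_setOf_eq] at ha ⊢
    have hna : ((-a : Subring.center Q) : Q) = -(a : Q) := rfl
    rw [hna, v_neg v hv0 hv1 hvmul]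
    exact ha

def Dmod (hv0 : ∀ a : Q, v a = ⊤ ↔ a = 0) (hv1 : v 1 = 0)
    (hvmul : ∀ a b : Q, v (a * b) = v a + v b)
    (hvadd : ∀ a b : Q, min (v a) (v b) ≤ v (a + b)) :
    Submodule (Rring v hv0 hv1 hvmul hvadd) Q where
  carrier := {x : Q | 0 ≤ v x}
  add_mem' {a b} ha hb := le_trans (le_min ha hb) (hvadd _ _)
  zero_mem' := by
    simp only [Set.mem_setOf_eq]
    rw [v_zero v hv0]
    exact le_top
  smul_mem' r x hx := by
    simp only [Set.mem_setOf_eq] at hx ⊢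
    have hs : r • x = ((r : Subring.center Q) : Q) * x := by
      rw [Subring.smul_def, Subring.smul_def, smul_eq_mul]
    rw [hs, hvmul]
    exact add_nonneg r.2 hx

end dvrlat


set_option maxHeartbeats 2000000
set_option synthInstance.maxHeartbeats 1000000

/-- Let `Q = Q(D)` be a division ring equipped with a complete discrete valuation
`v : Q → ℤ ∪ {∞}` (with valuation ring `D = {x : 0 ≤ v x}`), and suppose `Q` is
finite-dimensional over its centre `F`.  Then there is an `F`-basis `x_1, …, x_s` of `Q`
contained in `D` such that `D = R x_1 ⊕ ⋯ ⊕ R x_s`, where `R = F ∩ D`: every element of `Q`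
has a unique expression `Σ r_i x_i` with central coefficients, and the elements of `D` are
exactly those with all coefficients in `R`. -/
theorem dvr_is_free_lattice_over_central_dvr
    (Q : Type*) [DivisionRing Q] (v : Q → WithTop ℤ)
    (hv0 : ∀ a : Q, v a = ⊤ ↔ a = 0)
    (hv1 : v 1 = 0)
    (hvmul : ∀ a b : Q, v (a * b) = v a + v b)
    (hvadd : ∀ a b : Q, min (v a) (v b) ≤ v (a + b))
    (hdiscrete : ∃ π : Q, v π = 1)
    (hcomplete : ∀ x : ℕ → Q,
      (∀ N : ℤ, ∃ M : ℕ, ∀ m ≥ M, ∀ m' ≥ M, (N : WithTop ℤ) ≤ v (x m - x m')) →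
      ∃ b : Q, ∀ N : ℤ, ∃ M : ℕ, ∀ m ≥ M, (N : WithTop ℤ) ≤ v (x m - b))
    -- `Q` is finite-dimensional over its centre:
    (hfin : ∃ (m : ℕ) (b : Fin m → Q), ∀ q : Q, ∃ r : Fin m → Q,
      (∀ i, r i ∈ Subring.center Q) ∧ q = ∑ i, r i * b i) :
    ∃ (s : ℕ) (x : Fin s → Q),
      (∀ i, (0 : WithTop ℤ) ≤ v (x i)) ∧
      (∀ q : Q, ∃ r : Fin s → Q, (∀ i, r i ∈ Subring.center Q) ∧ q = ∑ i, r i * x i) ∧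
      (∀ r r' : Fin s → Q, (∀ i, r i ∈ Subring.center Q) → (∀ i, r' i ∈ Subring.center Q) →
        (∑ i, r i * x i) = ∑ i, r' i * x i → r = r') ∧
      (∀ q : Q, (0 : WithTop ℤ) ≤ v q →
        ∃ r : Fin s → Q, (∀ i, r i ∈ Subring.center Q) ∧ (∀ i, (0 : WithTop ℤ) ≤ v (r i)) ∧
          q = ∑ i, r i * x i) := by
  classical
  obtain ⟨π, hπ⟩ := hdiscrete
  have hπ0 : π ≠ 0 := by
    intro h
    rw [h, dvrlat.v_zero v hv0] at hπ
    exact (WithTop.top_ne_coe (α := ℤ)).elim (by exact_mod_cast hπ)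
  letI : NormedDivisionRing Q := dvrlat.qNDR v hv0 hv1 hvmul hvadd
  have hnorm : ∀ x : Q, ‖x‖ = dvrlat.qnorm v x := fun _ => rfl
  have hle : ∀ (x : Q) (N : ℤ), ‖x‖ ≤ (2:ℝ)^(-N) ↔ (N : WithTop ℤ) ≤ v x :=
    fun x N => dvrlat.qnorm_le_iff v hv0 x N
  haveI hQcomplete : CompleteSpace Q := by
    apply Metric.complete_of_cauchySeq_tendsto
    intro u hu
    have hcau : ∀ N : ℤ, ∃ M : ℕ, ∀ m ≥ M, ∀ m' ≥ M, (N : WithTop ℤ) ≤ v (u m - u m') := by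
      intro N
      obtain ⟨M, hM⟩ := (Metric.cauchySeq_iff.mp hu) ((2:ℝ)^(-N)) (by positivity)
      refine ⟨M, fun m hm m' hm' => (hle _ N).mp ?_⟩
      have := hM m hm m' hm'
      rw [dist_eq_norm] at this
      exact this.le
    obtain ⟨b, hb⟩ := hcomplete u hcau
    refine ⟨b, Metric.tendsto_atTop.mpr ?_⟩
    intro ε hε
    obtain ⟨N, hN⟩ := dvrlat.exists_zpow_lt hε
    obtain ⟨M, hM⟩ := hb N
    exact ⟨M, fun n hn => by
      rw [dist_eq_norm]; exact lt_of_le_of_lt ((hle _ N).mpr (hM n hn)) hN⟩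
  set F := Subring.center Q with hF
  have hinvF : ∀ x : Q, x ∈ F → x⁻¹ ∈ F := by
    intro x hx
    rw [Subring.mem_center_iff] at hx ⊢
    intro g
    by_cases h0 : x = 0
    · simp [h0]
    calc g * x⁻¹ = x⁻¹ * (x * (g * x⁻¹)) := by rw [← mul_assoc, inv_mul_cancel₀ h0, one_mul]
      _ = x⁻¹ * ((x * g) * x⁻¹) := by rw [mul_assoc x g]
      _ = x⁻¹ * ((g * x) * x⁻¹) := by rw [← hx g]
      _ = x⁻¹ * g := by rw [mul_assoc, mul_inv_cancel₀ h0, mul_one]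
  obtain ⟨m, bb, hbb⟩ := hfin
  have hspan : Submodule.span F (Set.range bb) = ⊤ := by
    rw [eq_top_iff]
    intro q _
    rw [Finsupp.mem_span_range_iff_exists_finsupp]
    obtain ⟨r, hr, hq⟩ := hbb q
    refine ⟨Finsupp.equivFunOnFinite.symm (fun i => (⟨r i, hr i⟩ : F)), ?_⟩
    rw [Finsupp.sum_fintype _ _ (by simp)]
    simp only [Finsupp.equivFunOnFinite_symm_apply_apply, Subring.smul_def]
    exact hq.symm
  haveI : Module.Finite F Q := ⟨hspan ▸ Submodule.fg_span (Set.finite_range bb)⟩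
  have hdep : ¬ LinearIndependent F (fun i : Fin (m+1) => π ^ (i : ℕ)) := by
    intro h
    have h1 := h.fintype_card_le_finrank
    have h2 : Module.finrank F Q ≤ m := by
      simpa using finrank_le_of_span_eq_top hspan
    simp [Fintype.card_fin] at h1
    omega
  obtain ⟨g, hg0, j0, hj0⟩ := Fintype.not_linearIndependent_iff.mp hdep
  -- there is a central element with nonzero finite valuation
  have hcentral : ∃ c : Q, c ∈ F ∧ c ≠ 0 ∧ ∃ a : ℤ, v c = (a : WithTop ℤ) ∧ a ≠ 0 := by
    by_contra hcon
    push_neg at hcon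
    have htriv : ∀ c : Q, c ∈ F → c ≠ 0 → v c = (0 : ℤ) := by
      intro c hc hc0
      obtain ⟨a, ha⟩ := dvrlat.exists_int v hv0 hc0
      have := hcon c hc hc0 a ha
      rw [ha, this]
    set t : Fin (m+1) → Q := fun i => (↑(g i) : Q) * π ^ (i : ℕ) with ht
    have hsum : ∑ i, t i = 0 := by
      rw [← hg0]
      exact Finset.sum_congr rfl fun i _ => (Subring.smul_def (g i) (π ^ (i:ℕ))).symm
    have hvt : ∀ i : Fin (m+1), g i ≠ 0 → v (t i) = (((i : ℕ) : ℤ) : WithTop ℤ) := by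
      intro i hi
      have hgi0 : (↑(g i) : Q) ≠ 0 := fun h => hi (Subtype.ext h)
      rw [ht]
      simp only
      rw [hvmul, htriv _ (g i).2 hgi0, dvrlat.v_pow v hv0 hv1 hvmul π hπ (i : ℕ)]
      simp
    set A : Finset (Fin (m+1)) := Finset.univ.filter (fun i => g i ≠ 0) with hA
    have hAne : A.Nonempty := ⟨j0, by simp [hA, hj0]⟩
    set j := A.min' hAne with hj
    have hjA : j ∈ A := A.min'_mem hAne
    have hgj : g j ≠ 0 := by simpa [hA] using hjA
    have htj : t j = -∑ i ∈ Finset.univ.erase j, t i := by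
      have := Finset.add_sum_erase Finset.univ t (Finset.mem_univ j)
      rw [hsum] at this
      exact eq_neg_of_add_eq_zero_left this
    have hge : (((j : ℕ) + 1 : ℤ) : WithTop ℤ) ≤ v (t j) := by
      rw [htj, dvrlat.v_neg v hv0 hv1 hvmul]
      apply dvrlat.v_sum v hv0 hvadd
      intro i hi
      by_cases hgi : g i = 0
      · rw [ht]
        simp only
        rw [hgi]
        simp [dvrlat.v_zero v hv0]
      · rw [hvt i hgi, WithTop.coe_le_coe]
        have hiA : i ∈ A := by simp [hA, hgi]
        have : j ≤ i := A.min'_le i hiA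
        have hne : i ≠ j := (Finset.mem_erase.mp hi).1
        have : (j : ℕ) < (i : ℕ) := lt_of_le_of_ne (by exact_mod_cast this) (fun h => hne (Fin.ext h.symm))
        omega
    rw [hvt j hgj, WithTop.coe_le_coe] at hge
    omega
  obtain ⟨c, hcF, hc0, a, hca, ha0⟩ := hcentral
  -- uniformizer of the center
  have hϖ : ∃ ϖ : Q, ϖ ∈ F ∧ ϖ ≠ 0 ∧ ∃ e : ℤ, v ϖ = (e : WithTop ℤ) ∧ 0 < e := by
    rcases lt_or_gt_of_ne ha0 with h | h
    · exact ⟨c⁻¹, hinvF c hcF, inv_ne_zero hc0, -a, dvrlat.v_inv v hv0 hv1 hvmul hc0 hca, by omega⟩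
    · exact ⟨c, hcF, hc0, a, hca, h⟩
  obtain ⟨ϖ, hϖF, hϖ0, e, hϖe, he0⟩ := hϖ
    -- normed field structure on the center
  letI : NormedField F :=
    { (inferInstance : Field F),
      (NormedDivisionRing.induced F Q { F.subtype with toFun := Subtype.val } Subtype.val_injective) with }
  have hnormF : ∀ c : F, ‖c‖ = ‖(c : Q)‖ := fun _ => rfl
  have hdistF : ∀ c d : F, dist c d = dist (c : Q) (d : Q) := fun _ _ => rfl
  letI : NontriviallyNormedField F := by
    refine ⟨⟨⟨ϖ⁻¹, hinvF ϖ hϖF⟩, ?_⟩⟩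
    rw [hnormF]
    show dvrlat.qnorm v (ϖ⁻¹ : Q) > 1
    rw [dvrlat.qnorm_eq v (inv_ne_zero hϖ0) (dvrlat.v_inv v hv0 hv1 hvmul hϖ0 hϖe), neg_neg]
    exact one_lt_zpow₀ (by norm_num) (by omega)
  haveI : CompleteSpace F := by
    apply Metric.complete_of_cauchySeq_tendsto
    intro u hu
    have huQ : CauchySeq (fun n => (u n : Q)) := by
      rw [Metric.cauchySeq_iff] at hu ⊢
      intro ε hε
      obtain ⟨N, hN⟩ := hu ε hε
      exact ⟨N, fun m hm n hn => by rw [← hdistF]; exact hN m hm n hn⟩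
    obtain ⟨bq, hbq⟩ := cauchySeq_tendsto_of_complete huQ
    have hbqF : bq ∈ F := by
      rw [Subring.mem_center_iff]
      intro g
      have h1 : Filter.Tendsto (fun n => g * (u n : Q)) Filter.atTop (nhds (g * bq)) :=
        hbq.const_mul g
      have h2 : Filter.Tendsto (fun n => (u n : Q) * g) Filter.atTop (nhds (bq * g)) :=
        hbq.mul_const g
      have heq : (fun n => g * (u n : Q)) = fun n => (u n : Q) * g := by
        funext n
        exact Subring.mem_center_iff.mp (u n).2 g
      rw [heq] at h1
      exact tendsto_nhds_unique h1 h2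
    refine ⟨⟨bq, hbqF⟩, ?_⟩
    rw [Metric.tendsto_atTop] at hbq ⊢
    intro ε hε
    obtain ⟨N, hN⟩ := hbq ε hε
    exact ⟨N, fun n hn => by rw [hdistF]; exact hN n hn⟩
  letI : ContinuousSMul F Q := by
    refine ⟨?_⟩
    have : Continuous fun p : F × Q => ((p.1 : Q) * p.2) :=
      (continuous_subtype_val.comp continuous_fst).mul continuous_snd
    exact this
  letI : NormedSpace F Q := by
    refine ⟨fun c x => ?_⟩
    rw [Subring.smul_def, smul_eq_mul, hnorm, dvrlat.qnorm_mul v hv0 hvmul, hnormF]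
    exact le_of_eq rfl
  haveI : FiniteDimensional F Q := ‹Module.Finite F Q›
  set n := Module.finrank F Q with hn
  set b := Module.finBasis F Q with hb
  -- bound on coordinates of integral elements
  have hcoordbound : ∃ k : ℕ, ∀ x : Q, (0 : WithTop ℤ) ≤ v x →
      ∀ i, ((-(k * e) : ℤ) : WithTop ℤ) ≤ v ((b.repr x i : Q)) := by
    have hkey : ∀ i : Fin n, ∃ N : ℤ, ∀ x : Q, (0 : WithTop ℤ) ≤ v x →
        ((-N : ℤ) : WithTop ℤ) ≤ v ((b.repr x i : Q)) := by
      intro i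
      have hcont : Continuous (b.coord i) := (b.coord i).continuous_of_finiteDimensional
      obtain ⟨C, hC0, hC⟩ := @ContinuousLinearMap.bound _ _ _ _ _ _ _ _ _ _ _ ⟨rfl⟩ (⟨b.coord i, hcont⟩ : Q →L[F] F)
      obtain ⟨N0, hN0⟩ := pow_unbounded_of_one_lt C (by norm_num : (1:ℝ) < 2)
      refine ⟨N0, fun x hx => ?_⟩
      have hx1 : ‖x‖ ≤ 1 := by simpa using (hle x 0).mpr hx
      have h2 : ‖b.coord i x‖ ≤ (2:ℝ) ^ (-(-N0 : ℤ)) := by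
        rw [neg_neg]
        calc ‖b.coord i x‖ ≤ C * ‖x‖ := hC x
          _ ≤ C := mul_le_of_le_one_right hC0.le hx1
          _ ≤ (2:ℝ) ^ (N0 : ℤ) := by
              rw [zpow_natCast]
              exact hN0.le
      rw [hnormF, Module.Basis.coord_apply] at h2
      exact (hle _ (-N0)).mp h2
    choose N hN using hkey
    set k := Finset.univ.sup (fun i => (N i).toNat) with hk
    refine ⟨k, fun x hx i => le_trans ?_ (hN i x hx)⟩
    rw [WithTop.coe_le_coe]
    have h1 : (N i).toNat ≤ k := Finset.le_sup (f := fun i => (N i).toNat) (Finset.mem_univ i)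
    have h2 : N i ≤ ((N i).toNat : ℤ) := Int.self_le_toNat (N i)
    have h3 : (k : ℤ) ≤ (k : ℤ) * e := le_mul_of_one_le_right (by positivity) (by omega)
    have h4 : ((N i).toNat : ℤ) ≤ (k : ℤ) := by exact_mod_cast h1
    omega
  obtain ⟨k, hkbound⟩ := hcoordbound
  set R := dvrlat.Rring v hv0 hv1 hvmul hvadd with hRdef
  set D := dvrlat.Dmod v hv0 hv1 hvmul hvadd with hDdef
  have hsmulRQ : ∀ (r : R) (x : Q), r • x = ((r : Subring.center Q) : Q) * x := fun r x => by
    rw [Subring.smul_def, Subring.smul_def, smul_eq_mul]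
  have hsmulFQ : ∀ (c : F) (x : Q), c • x = (c : Q) * x := fun c x => by
    rw [Subring.smul_def, smul_eq_mul]
  have hRv : ∀ r : R, (0 : WithTop ℤ) ≤ v ((r : Subring.center Q) : Q) := fun r => r.2
  have hRcen : ∀ r : R, ((r : Subring.center Q) : Q) ∈ F := fun r => (r : Subring.center Q).2
  -- R is a PID
  haveI hRpid : IsPrincipalIdealRing R := by
    constructor
    intro I
    by_cases hI : I = ⊥
    · exact ⟨⟨0, by rw [hI]; exact (Submodule.span_zero_singleton _).symm⟩⟩
    have hex : ∃ nn : ℕ, ∃ x : R, x ∈ I ∧ x ≠ 0 ∧ v ((x : Subring.center Q) : Q) = ((nn : ℤ) : WithTop ℤ) := by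
      obtain ⟨x0, hx0I, hx00⟩ := Submodule.exists_mem_ne_zero_of_ne_bot hI
      have hx0Q : ((x0 : Subring.center Q) : Q) ≠ 0 := by
        intro h
        exact hx00 (Subtype.ext (Subtype.ext h))
      obtain ⟨a0, ha0⟩ := dvrlat.exists_int v hv0 hx0Q
      have ha0nn : 0 ≤ a0 := by
        have := hRv x0
        rw [ha0] at this
        exact_mod_cast this
      exact ⟨a0.toNat, x0, hx0I, hx00, by rw [ha0, Int.toNat_of_nonneg ha0nn]⟩
    obtain ⟨x0, hx0I, hx00, hx0v⟩ := Nat.find_spec hex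
    have hx0Q : ((x0 : Subring.center Q) : Q) ≠ 0 := by
      intro h
      exact hx00 (Subtype.ext (Subtype.ext h))
    refine ⟨⟨x0, le_antisymm ?_ ?_⟩⟩
    · intro y hyI
      by_cases hy0 : y = 0
      · rw [hy0]; exact zero_mem _
      have hyQ : ((y : Subring.center Q) : Q) ≠ 0 := by
        intro h
        exact hy0 (Subtype.ext (Subtype.ext h))
      obtain ⟨ay, hay⟩ := dvrlat.exists_int v hv0 hyQ
      have haynn : 0 ≤ ay := by
        have := hRv y
        rw [hay] at this
        exact_mod_cast this
      have hmin : (Nat.find hex : ℤ) ≤ ay := by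
        by_contra hlt
        push_neg at hlt
        have hlt' : ay.toNat < Nat.find hex := by omega
        exact Nat.find_min hex hlt' ⟨y, hyI, hy0, by rw [hay, Int.toNat_of_nonneg haynn]⟩
      set z : Q := ((y : Subring.center Q) : Q) * (((x0 : Subring.center Q) : Q))⁻¹ with hz
      have hzF : z ∈ F := mul_mem (hRcen y) (hinvF _ (hRcen x0))
      have hzv : (0 : WithTop ℤ) ≤ v z := by
        rw [hz, hvmul, hay, dvrlat.v_inv v hv0 hv1 hvmul hx0Q hx0v, ← WithTop.coe_add]
        exact_mod_cast (by omega : (0 : ℤ) ≤ ay + -(Nat.find hex : ℤ))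
      refine Ideal.mem_span_singleton'.mpr ⟨⟨⟨z, hzF⟩, hzv⟩, ?_⟩
      apply Subtype.ext
      apply Subtype.ext
      show z * ((x0 : Subring.center Q) : Q) = ((y : Subring.center Q) : Q)
      rw [hz, mul_assoc, inv_mul_cancel₀ hx0Q, mul_one]
    · exact (Submodule.span_singleton_le_iff_mem _ _).mpr hx0I
  -- packaging of central powers of the uniformiser
  have hϖinvF : (ϖ⁻¹ : Q) ∈ F := hinvF _ hϖF
  have hϖikF : ∀ t : ℕ, (ϖ⁻¹ : Q) ^ t ∈ F := fun t => pow_mem hϖinvF t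
  have hϖkF : ∀ t : ℕ, (ϖ : Q) ^ t ∈ F := fun t => pow_mem hϖF t
  have hϖkinv : ∀ t : ℕ, (ϖ : Q) ^ t * (ϖ⁻¹ : Q) ^ t = 1 := fun t => by
    rw [inv_pow, mul_inv_cancel₀ (pow_ne_zero t hϖ0)]
  have hϖinvk : ∀ t : ℕ, (ϖ⁻¹ : Q) ^ t * (ϖ : Q) ^ t = 1 := fun t => by
    rw [inv_pow, inv_mul_cancel₀ (pow_ne_zero t hϖ0)]
  set wb : Fin n → Q := fun i => (ϖ⁻¹) ^ k * b i with hwb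
  have hli : LinearIndependent R wb := by
    rw [Fintype.linearIndependent_iff]
    intro g hg
    have hg' : ∑ i, (⟨((g i : Subring.center Q) : Q) * (ϖ⁻¹) ^ k,
        mul_mem (hRcen (g i)) (hϖikF k)⟩ : F) • b i = 0 := by
      rw [← hg]
      refine Finset.sum_congr rfl fun i _ => ?_
      rw [hsmulFQ, hsmulRQ]
      show ((g i : Subring.center Q) : Q) * (ϖ⁻¹) ^ k * b i
        = ((g i : Subring.center Q) : Q) * ((ϖ⁻¹) ^ k * b i)
      rw [mul_assoc]
    have hind := Fintype.linearIndependent_iff.mp b.linearIndependent _ hg'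
    intro i
    have hi := hind i
    rw [Subtype.ext_iff] at hi
    have hgiQ : ((g i : Subring.center Q) : Q) = 0 := by
      rcases mul_eq_zero.mp hi with h | h
      · exact h
      · exact absurd h (pow_ne_zero k (inv_ne_zero hϖ0))
    exact Subtype.ext (Subtype.ext hgiQ)
  have hDO : D ≤ Submodule.span R (Set.range wb) := by
    intro d hd
    have hd' : (0 : WithTop ℤ) ≤ v d := hd
    have hrepr : ∑ i, ((b.repr d i : Q)) * b i = d := by
      conv_rhs => rw [← Module.Basis.sum_repr b d]
      exact Finset.sum_congr rfl fun i _ => by rw [hsmulFQ]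
    have hcoef : ∀ i, (0 : WithTop ℤ) ≤ v (ϖ ^ k * (b.repr d i : Q)) := by
      intro i
      rw [hvmul, dvrlat.v_pow v hv0 hv1 hvmul ϖ hϖe k]
      have hkb := hkbound d hd' i
      by_cases hc0 : (b.repr d i : Q) = 0
      · rw [hc0, dvrlat.v_zero v hv0, add_top]; exact le_top
      obtain ⟨ac, hac⟩ := dvrlat.exists_int v hv0 hc0
      rw [hac, ← WithTop.coe_add]
      rw [hac, WithTop.coe_le_coe] at hkb
      exact_mod_cast (by omega : (0:ℤ) ≤ (k:ℤ) * e + ac)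
    have hdsum : (∑ i, (⟨⟨ϖ ^ k * (b.repr d i : Q),
        mul_mem (hϖkF k) (b.repr d i).2⟩, hcoef i⟩ : R) • wb i) = d := by
      have hterm : ∀ i, (⟨⟨ϖ ^ k * (b.repr d i : Q),
          mul_mem (hϖkF k) (b.repr d i).2⟩, hcoef i⟩ : R) • wb i
          = (b.repr d i : Q) * b i := by
        intro i
        rw [hsmulRQ]
        show ϖ ^ k * (b.repr d i : Q) * ((ϖ⁻¹) ^ k * b i) = (b.repr d i : Q) * b i
        have hcen : ϖ ^ k * (b.repr d i : Q) = (b.repr d i : Q) * ϖ ^ k :=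
          (Subring.mem_center_iff.mp (hϖkF k) (b.repr d i : Q)).symm
        rw [hcen, mul_assoc, ← mul_assoc (ϖ ^ k), hϖkinv k, one_mul]
      rw [Finset.sum_congr rfl fun i _ => hterm i]
      exact hrepr
    rw [← hdsum]
    exact Submodule.sum_mem _ fun i _ =>
      Submodule.smul_mem _ _ (Submodule.subset_span (Set.mem_range_self i))
  obtain ⟨s, xB⟩ := Submodule.basisOfPidOfLE hDO (Module.Basis.span hli)
    -- scaling into D
  have hscale : ∀ q : Q, ∃ t0 : ℕ, ∀ t : ℕ, t0 ≤ t → (0 : WithTop ℤ) ≤ v (ϖ ^ t * q) := by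
    intro q
    by_cases hq0 : q = 0
    · refine ⟨0, fun t _ => ?_⟩
      rw [hq0, mul_zero, dvrlat.v_zero v hv0]
      exact le_top
    obtain ⟨aq, haq⟩ := dvrlat.exists_int v hv0 hq0
    refine ⟨aq.natAbs, fun t ht => ?_⟩
    rw [hvmul, dvrlat.v_pow v hv0 hv1 hvmul ϖ hϖe t, haq, ← WithTop.coe_add]
    have h1 : (t : ℤ) ≤ (t : ℤ) * e := le_mul_of_one_le_right (by positivity) (by omega)
    have h2 : (aq.natAbs : ℤ) ≤ (t : ℤ) := by exact_mod_cast ht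
    have h3 : -aq ≤ (aq.natAbs : ℤ) := by omega
    exact_mod_cast (by omega : (0:ℤ) ≤ (t:ℤ) * e + aq)
  -- expansion of elements of D in the basis xB
  have hpush : ∀ dd : D, (dd : Q)
      = ∑ i, (((xB.repr dd i : Subring.center Q) : Q)) * ((xB i : Q)) := by
    intro dd
    have h0 : ((∑ i, xB.repr dd i • xB i : D) : Q) = (dd : Q) :=
      congrArg Subtype.val (xB.sum_repr dd)
    rw [← h0, AddSubmonoidClass.coe_finset_sum]
    refine Finset.sum_congr rfl fun i _ => ?_
    rw [show ((xB.repr dd i • xB i : D) : Q) = xB.repr dd i • ((xB i : D) : Q) from rfl,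
      hsmulRQ]
  refine ⟨s, fun i => ((xB i : D) : Q), fun i => (xB i).2, ?_, ?_, ?_⟩
  · -- spanning over the centre
    intro q
    obtain ⟨t0, ht0⟩ := hscale q
    have hdD : ϖ ^ t0 * q ∈ D := ht0 t0 le_rfl
    have hq : q = (ϖ⁻¹) ^ t0 * (ϖ ^ t0 * q) := by
      rw [← mul_assoc, hϖinvk t0, one_mul]
    refine ⟨fun i => (ϖ⁻¹) ^ t0 * ((xB.repr ⟨ϖ ^ t0 * q, hdD⟩ i : Subring.center Q) : Q),
      fun i => mul_mem (hϖikF t0) (hRcen _), ?_⟩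
    calc q = (ϖ⁻¹) ^ t0 * (ϖ ^ t0 * q) := hq
      _ = (ϖ⁻¹) ^ t0 * ∑ i, (((xB.repr ⟨ϖ ^ t0 * q, hdD⟩ i : Subring.center Q) : Q))
            * ((xB i : D) : Q) := by rw [← hpush ⟨ϖ ^ t0 * q, hdD⟩]
      _ = ∑ i, ((ϖ⁻¹) ^ t0 * ((xB.repr ⟨ϖ ^ t0 * q, hdD⟩ i : Subring.center Q) : Q))
            * ((xB i : D) : Q) := by
          rw [Finset.mul_sum]
          exact Finset.sum_congr rfl fun i _ => by rw [mul_assoc]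
  · -- uniqueness of central coefficients
    intro r r' hr hr' hsum
    have hdc : ∀ i, r i - r' i ∈ F := fun i => sub_mem (hr i) (hr' i)
    have hzero : ∑ i, (r i - r' i) * ((xB i : D) : Q) = 0 := by
      have : ∑ i, (r i - r' i) * ((xB i : D) : Q)
          = (∑ i, r i * ((xB i : D) : Q)) - ∑ i, r' i * ((xB i : D) : Q) := by
        rw [← Finset.sum_sub_distrib]
        exact Finset.sum_congr rfl fun i _ => by rw [sub_mul]
      rw [this, hsum, sub_self]
    have hts : ∀ i, ∃ t0:ℕ, ∀ t : ℕ, t0 ≤ t → (0 : WithTop ℤ) ≤ v (ϖ ^ t * (r i - r' i)) :=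
      fun i => hscale (r i - r' i)
    choose tf htf using hts
    have hTD : ∀ i, (0:WithTop ℤ) ≤ v (ϖ ^ (Finset.univ.sup tf) * (r i - r' i)) :=
      fun i => htf i _ (Finset.le_sup (Finset.mem_univ i))
    have hrrsum : (∑ i, (⟨⟨ϖ ^ (Finset.univ.sup tf) * (r i - r' i),
        mul_mem (hϖkF _) (hdc i)⟩, hTD i⟩ : R) • xB i) = (0 : D) := by
      apply Subtype.ext
      rw [AddSubmonoidClass.coe_finset_sum, ZeroMemClass.coe_zero]
      have hterm : ∀ i, (((⟨⟨ϖ ^ (Finset.univ.sup tf) * (r i - r' i),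
          mul_mem (hϖkF _) (hdc i)⟩, hTD i⟩ : R) • xB i : D) : Q)
          = ϖ ^ (Finset.univ.sup tf) * ((r i - r' i) * ((xB i : D) : Q)) := by
        intro i
        rw [show (((⟨⟨ϖ ^ (Finset.univ.sup tf) * (r i - r' i),
          mul_mem (hϖkF _) (hdc i)⟩, hTD i⟩ : R) • xB i : D) : Q)
          = (⟨⟨ϖ ^ (Finset.univ.sup tf) * (r i - r' i),
          mul_mem (hϖkF _) (hdc i)⟩, hTD i⟩ : R) • ((xB i : D) : Q) from rfl, hsmulRQ]
        show ϖ ^ (Finset.univ.sup tf) * (r i - r' i) * ((xB i : D) : Q) = _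
        rw [mul_assoc]
      rw [Finset.sum_congr rfl fun i _ => hterm i, ← Finset.mul_sum, hzero, mul_zero]
    have hind := Fintype.linearIndependent_iff.mp xB.linearIndependent _ hrrsum
    funext i
    have h1 := hind i
    rw [Subtype.ext_iff, Subtype.ext_iff] at h1
    have h2 : ϖ ^ (Finset.univ.sup tf) * (r i - r' i) = 0 := h1
    have h3 : r i - r' i = 0 := by
      rcases mul_eq_zero.mp h2 with h | h
      · exact absurd h (pow_ne_zero _ hϖ0)
      · exact h
    have := sub_eq_zero.mp h3
    exact this
  · -- integral coefficients
    intro q hq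
    have hdD : q ∈ D := hq
    exact ⟨fun i => ((xB.repr ⟨q, hdD⟩ i : Subring.center Q) : Q),
      fun i => hRcen _, fun i => hRv _, hpush ⟨q, hdD⟩⟩
end

section
/- Let R be a ring with a complete, positive, Zariskian valuation w : R → ℕ ∪ {∞} (meaning w(xy) = w(x) + w(y) for all x,y), let F be a finite group, and let S = R ∗ F be a crossed product with action σ : F → Aut(R) and twist γ : F × F → R^×. Suppose w(σ(g)(r)) = w(r) for all g ∈ F, r ∈ R. Then w'(Σ_{g∈F} r_g ḡ) := min_g w(r_g) defines a ring filtration on S extending w, with w'(r ḡ · s h̄) = w'(r ḡ) + w'(s h̄) for all r, s ∈ R and g, h ∈ F, and the associated graded ring of (S, w') is isomorphic to (gr R) ∗ F. -/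
/-- A positive (ℕ-valued) ring filtration, together with the (derivable) property
`w(-x) = w(x)`. -/
structure NatFiltration (S : Type*) [Ring S] where
  v : S → WithTop ℕ
  min_le_add : ∀ x y : S, min (v x) (v y) ≤ v (x + y)
  add_le_mul : ∀ x y : S, v x + v y ≤ v (x * y)
  map_one : v 1 = 0
  map_zero : v 0 = ⊤
  map_neg : ∀ x : S, v (-x) = v x

/-- The additive subgroup `F_n S = {s : w(s) ≥ n}` of a filtered ring. -/
def NatFiltration.level {S : Type*} [Ring S] (W : NatFiltration S) (n : ℕ) : AddSubgroup S where
  carrier := {s | (n : WithTop ℕ) ≤ W.v s}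
  zero_mem' := by simp only [Set.mem_setOf_eq, W.map_zero]; exact le_top
  add_mem' := fun {a b} ha hb => le_trans (le_min ha hb) (W.min_le_add a b)
  neg_mem' := fun {a} ha => by simpa only [Set.mem_setOf_eq, W.map_neg] using ha

/-- The `n`-th graded piece `F_n S / F_{n+1} S` of a filtered ring. -/
def NatFiltration.grPiece {S : Type*} [Ring S] (W : NatFiltration S) (n : ℕ) :=
  W.level n ⧸ ((W.level (n + 1)).addSubgroupOf (W.level n))

noncomputable instance {S : Type*} [Ring S] (W : NatFiltration S) (n : ℕ) :
    AddCommGroup (W.grPiece n) :=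
  QuotientAddGroup.Quotient.addCommGroup _

/-- A sequence is Cauchy with respect to the filtration `w`. -/
def NatFiltCauchy {S : Type*} [Ring S] (w : S → WithTop ℕ) (x : ℕ → S) : Prop :=
  ∀ N : ℕ, ∃ M : ℕ, ∀ m ≥ M, ∀ m' ≥ M, (N : WithTop ℕ) ≤ w (x m - x m')

/-- Convergence with respect to the filtration `w`. -/
def NatFiltTendsto {S : Type*} [Ring S] (w : S → WithTop ℕ) (x : ℕ → S) (b : S) : Prop :=
  ∀ N : ℕ, ∃ M : ℕ, ∀ m ≥ M, (N : WithTop ℕ) ≤ w (x m - b)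

/-- Let `R` carry a complete, positive valuation `w` (so `w(xy) = w(x)+w(y)`), let `F` be a
finite group, and let `S = R ∗ F` be a crossed product with action `σ` and twist `γ`
(presented by an injective ring map `ι : R → S` and units `u g`, over which `S` is free).
If `w(σ(g)(r)) = w(r)` for all `g, r`, then `w'(Σ r_g ḡ) = min_g w(r_g)` defines a complete
ring filtration on `S` extending `w`, multiplicative on monomials
(`w'(rḡ · s h̄) = w'(rḡ) + w'(s h̄)`), whose associated graded ring is, degreewise, free
over `gr R` with basis `F` (i.e. `gr S ≅ (gr R) ∗ F`). -/
theorem crossedProduct_filtration_extension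
    (R : Type*) [Ring R] (WR : NatFiltration R)
    (hval : ∀ x y : R, WR.v (x * y) = WR.v x + WR.v y)
    (hRcomplete : ∀ x : ℕ → R, NatFiltCauchy WR.v x → ∃ b : R, NatFiltTendsto WR.v x b)
    (F : Type*) [Group F] [Fintype F]
    (S : Type*) [Ring S]
    (ι : R →+* S) (hι : Function.Injective ι)
    (u : F → Sˣ) (hu1 : u 1 = 1)
    (σ : F → RingAut R)
    (hσ : ∀ (g : F) (r : R), (u g : S) * ι r = ι (σ g r) * (u g : S))
    (γ : F → F → Rˣ)
    (hγ : ∀ g h : F, (u g : S) * (u h : S) = ι ((γ g h : Rˣ) : R) * (u (g * h) : S))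
    (hbasis : ∀ s : S, ∃! c : F → R, s = ∑ g : F, ι (c g) * (u g : S))
    (hwinv : ∀ (g : F) (r : R), WR.v (σ g r) = WR.v r) :
    ∃ W' : NatFiltration S,
      (∀ c : F → R, W'.v (∑ g : F, ι (c g) * (u g : S)) = ⨅ g : F, WR.v (c g)) ∧
      (∀ r : R, W'.v (ι r) = WR.v r) ∧
      (∀ (r s : R) (g h : F),
        W'.v (ι r * (u g : S) * (ι s * (u h : S))) =
          W'.v (ι r * (u g : S)) + W'.v (ι s * (u h : S))) ∧
      (∀ x : ℕ → S, NatFiltCauchy W'.v x → ∃ b : S, NatFiltTendsto W'.v x b) ∧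
      (∀ n : ℕ, Nonempty (W'.grPiece n ≃+ (F → WR.grPiece n))) := by
  classical
  -- coordinate function
  set coord : S → F → R := fun s => (hbasis s).choose with hcoorddef
  have hrep : ∀ s : S, s = ∑ g : F, ι (coord s g) * (u g : S) :=
    fun s => (hbasis s).choose_spec.1
  have huniq : ∀ (s : S) (c : F → R), s = ∑ g : F, ι (c g) * (u g : S) → coord s = c :=
    fun s c h => ((hbasis s).choose_spec.2 c h).symm
  have hadd : ∀ x y : S, coord (x + y) = coord x + coord y := by
    intro x y
    apply huniq
    conv_lhs => rw [hrep x, hrep y]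
    rw [← Finset.sum_add_distrib]
    exact Finset.sum_congr rfl fun g _ => by simp [add_mul]
  have hzero0 : coord 0 = 0 := huniq 0 0 (by simp)
  have hnegc : ∀ x : S, coord (-x) = -coord x := by
    intro x
    apply huniq
    simp only [Pi.neg_apply, map_neg, neg_mul, Finset.sum_neg_distrib]
    rw [← hrep]
  have hsub : ∀ x y : S, coord (x - y) = coord x - coord y := by
    intro x y
    rw [sub_eq_add_neg, hadd, hnegc, ← sub_eq_add_neg]
  have hmonoc : ∀ (r : R) (g : F), coord (ι r * (u g : S)) = fun g' => if g' = g then r else 0 := by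
    intro r g
    apply huniq
    rw [Finset.sum_congr rfl (fun g' _ =>
      show ι (if g' = g then r else 0) * (u g' : S) = if g' = g then ι r * (u g' : S) else 0 by
        split <;> simp)]
    rw [Finset.sum_ite_eq' Finset.univ g (fun g' => ι r * (u g' : S))]
    simp
  -- units have value zero
  have vunit : ∀ x : Rˣ, WR.v (x : R) = 0 := by
    intro x
    have h : WR.v ((x : R) * ((x⁻¹ : Rˣ) : R)) = WR.v (x : R) + WR.v ((x⁻¹ : Rˣ) : R) :=
      hval _ _
    rw [Units.mul_inv, WR.map_one] at h
    exact (add_eq_zero.mp h.symm).1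
  -- value of a monomial
  have hvmono : ∀ (r : R) (g : F),
      (⨅ g' : F, WR.v (coord (ι r * (u g : S)) g')) = WR.v r := by
    intro r g
    rw [hmonoc]
    apply le_antisymm
    · exact (iInf_le _ g).trans (by simp)
    · refine le_iInf fun g' => ?_
      by_cases h : g' = g <;> simp [h, WR.map_zero]
  -- min_le_add
  have hminadd : ∀ x y : S,
      min (⨅ g, WR.v (coord x g)) (⨅ g, WR.v (coord y g)) ≤ ⨅ g, WR.v (coord (x + y) g) := by
    intro x y
    rw [hadd]
    refine le_iInf fun g => ?_
    exact le_trans (min_le_min (iInf_le _ g) (iInf_le _ g)) (WR.min_le_add _ _)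
  -- values of sums
  have hsumgeF : ∀ (n : WithTop ℕ) (t : Finset F) (f : F → S),
      (∀ i ∈ t, n ≤ ⨅ g, WR.v (coord (f i) g)) → n ≤ ⨅ g, WR.v (coord (∑ i ∈ t, f i) g) := by
    intro n t f
    induction t using Finset.induction_on with
    | empty => intro _; simp [hzero0, WR.map_zero]
    | insert _ _ hx ih =>
        intro h
        rw [Finset.sum_insert hx]
        refine le_trans (le_min (h _ (Finset.mem_insert_self _ _))
          (ih fun p hp => h p (Finset.mem_insert_of_mem hp))) (hminadd _ _)
  -- monomial multiplication
  have hmonoMul : ∀ (r s : R) (g h : F),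
      (ι r * (u g : S)) * (ι s * (u h : S)) =
        ι (r * σ g s * ((γ g h : Rˣ) : R)) * (u (g * h) : S) := by
    intro r s g h
    rw [mul_assoc (ι r) ((u g : S)) (ι s * (u h : S)),
      ← mul_assoc ((u g : S)) (ι s) ((u h : S)), hσ,
      mul_assoc (ι (σ g s)) ((u g : S)) ((u h : S)), hγ,
      ← mul_assoc (ι (σ g s)), ← map_mul, ← mul_assoc, ← map_mul,
      ← mul_assoc r (σ g s)]
  have hvalmono : ∀ (r s : R) (g h : F),
      WR.v (r * σ g s * ((γ g h : Rˣ) : R)) = WR.v r + WR.v s := by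
    intro r s g h
    rw [hval, hval, hwinv, vunit, add_zero]
  -- add_le_mul
  have haddmul : ∀ x y : S,
      (⨅ g, WR.v (coord x g)) + (⨅ g, WR.v (coord y g)) ≤ ⨅ g, WR.v (coord (x * y) g) := by
    intro x y
    have h1 : x * y = ∑ g : F, ∑ h : F,
        ι (coord x g * σ g (coord y h) * ((γ g h : Rˣ) : R)) * (u (g * h) : S) := by
      conv_lhs => rw [hrep x, hrep y]
      rw [Finset.sum_mul_sum]
      exact Finset.sum_congr rfl fun g _ => Finset.sum_congr rfl fun h _ => hmonoMul _ _ _ _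
    rw [h1]
    refine hsumgeF _ _ _ fun g _ => hsumgeF _ _ _ fun h _ => ?_
    rw [hvmono, hvalmono]
    exact add_le_add (iInf_le _ g) (iInf_le _ h)
  have hone : (⨅ g, WR.v (coord (1 : S) g)) = 0 := by
    rw [show (1 : S) = ι (1 : R) * ((u 1 : Sˣ) : S) by simp [hu1], hvmono, WR.map_one]
  have hzero' : (⨅ g, WR.v (coord (0 : S) g)) = ⊤ := by
    simp [hzero0, WR.map_zero]
  have hnegv : ∀ x : S, (⨅ g, WR.v (coord (-x) g)) = ⨅ g, WR.v (coord x g) := by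
    intro x
    rw [hnegc]
    simp [WR.map_neg]
  refine ⟨⟨fun s => ⨅ g, WR.v (coord s g), hminadd, haddmul, hone, hzero', hnegv⟩,
    ?_, ?_, ?_, ?_, ?_⟩
  · intro c
    show (⨅ g, WR.v (coord (∑ g : F, ι (c g) * (u g : S)) g)) = ⨅ g, WR.v (c g)
    rw [huniq _ c rfl]
  · intro r
    have h := hvmono r 1
    rw [hu1] at h
    simpa using h
  · intro r s g h
    show (⨅ g', WR.v (coord ((ι r * (u g : S)) * (ι s * (u h : S))) g')) =
      (⨅ g', WR.v (coord (ι r * (u g : S)) g')) + (⨅ g', WR.v (coord (ι s * (u h : S)) g'))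
    rw [hmonoMul, hvmono, hvalmono, hvmono, hvmono]
  · intro x hx
    have hcauchy : ∀ g : F, NatFiltCauchy WR.v (fun m => coord (x m) g) := by
      intro g N
      obtain ⟨M, hM⟩ := hx N
      refine ⟨M, fun m hm m' hm' => le_trans (hM m hm m' hm') ?_⟩
      show (⨅ g', WR.v (coord (x m - x m') g')) ≤ WR.v (coord (x m) g - coord (x m') g)
      rw [hsub]
      exact iInf_le _ g
    choose b hb using fun g => hRcomplete _ (hcauchy g)
    refine ⟨∑ g : F, ι (b g) * (u g : S), ?_⟩
    have hcb : coord (∑ g : F, ι (b g) * (u g : S)) = b := huniq _ _ rfl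
    intro N
    choose Mg hMg using fun g => hb g N
    refine ⟨Finset.univ.sup Mg, fun m hm => ?_⟩
    show (N : WithTop ℕ) ≤ ⨅ g, WR.v (coord (x m - ∑ g : F, ι (b g) * (u g : S)) g)
    rw [hsub, hcb]
    refine le_iInf fun g => ?_
    exact hMg g m (le_trans (Finset.le_sup (Finset.mem_univ g)) hm)
  · intro n
    set W' : NatFiltration S :=
      ⟨fun s => ⨅ g, WR.v (coord s g), hminadd, haddmul, hone, hzero', hnegv⟩ with hW'
    have hmem : ∀ (s : S) (k : ℕ), s ∈ W'.level k ↔ ∀ g, (k : WithTop ℕ) ≤ WR.v (coord s g) := by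
      intro s k
      show ((k : WithTop ℕ) ≤ ⨅ g, WR.v (coord s g)) ↔ _
      exact le_iInf_iff
    let φ : W'.level n →+ (F → WR.grPiece n) :=
      AddMonoidHom.mk' (fun s g =>
        QuotientAddGroup.mk ⟨coord s.1 g, (hmem s.1 n).mp s.2 g⟩)
        (by
          intro a b
          funext g
          show (QuotientAddGroup.mk _ : WR.grPiece n) = (QuotientAddGroup.mk _ : WR.grPiece n) + (QuotientAddGroup.mk _ : WR.grPiece n)
          rw [← QuotientAddGroup.mk_add]
          congr 1
          apply Subtype.ext
          show coord ((a : S) + (b : S)) g = coord (a : S) g + coord (b : S) g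
          rw [hadd]; rfl)
    have hφsurj : Function.Surjective φ := by
      intro f
      choose c hc using fun g => QuotientAddGroup.mk_surjective (f g)
      have hcs : coord (∑ g : F, ι ((c g : R)) * (u g : S)) = fun g => (c g : R) :=
        huniq _ _ rfl
      have hs : (∑ g : F, ι ((c g : R)) * (u g : S)) ∈ W'.level n := by
        rw [hmem]
        intro g
        rw [hcs]
        exact (c g).2
      refine ⟨⟨_, hs⟩, ?_⟩
      funext g
      show QuotientAddGroup.mk _ = f g
      rw [← hc g]
      congr 1
      exact Subtype.ext (congrFun hcs g)
    have hker : φ.ker = (W'.level (n + 1)).addSubgroupOf (W'.level n) := by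
      ext s
      simp only [AddMonoidHom.mem_ker, AddSubgroup.mem_addSubgroupOf]
      constructor
      · intro h
        rw [hmem]
        intro g
        have h2 := congrFun h g
        rw [show φ s g = QuotientAddGroup.mk ⟨coord s.1 g, (hmem s.1 n).mp s.2 g⟩ from rfl] at h2
        exact (QuotientAddGroup.eq_zero_iff _).mp h2
      · intro h
        funext g
        show QuotientAddGroup.mk _ = 0
        exact (QuotientAddGroup.eq_zero_iff _).mpr ((hmem s.1 (n + 1)).mp h g)
    exact ⟨(QuotientAddGroup.quotientAddEquivOfEq hker.symm).trans
      (QuotientAddGroup.quotientKerEquivOfSurjective φ hφsurj)⟩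
end
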